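/- Let f : X → ℝ ∪ {+∞} be proper lsc and suppose f has the KL property at x̄ with exponent p = 1/2: there exist c > 0, ε > 0, η > 0 with dist(0, ∂f(x)) ≥ c·(f(x) − f(x̄))^{1/2} for x ∈ B(x̄, ε), f(x̄) < f(x) < f(x̄) + η. Let {x_k} be a sequence converging to x̄ with f(x_k) ↓ f(x̄), and suppose there exist α > 0, β > 0 such that for all large k: (i) f(x_k) − f(x_{k+1}) ≥ β‖x_{k+1} − x_k‖², and (ii) dist(0, ∂f(x_{k+1})) ≤ α‖x_{k+1} − x_k‖. Then the sequence {f(x_k) − f(x̄)} converges Q-linearly to 0, i.e., there exist ρ ∈ (0,1) and K such that f(x_{k+1}) − f(x̄) ≤ ρ·(f(x_k) − f(x̄)) for all k ≥ K. -/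

import Mathlib

/-!
Write `b = f x_{k+1} - f x̄`, `a = f x_k - f x̄` and `d = ‖x_{k+1} - x_k‖`. Near `x̄` the KL
inequality and the relative error bound give `c √b ≤ α d`, so `c² b ≤ α² d²` (trivially so
when `b ≤ 0`), while sufficient decrease gives `β d² ≤ a - b`. Eliminating `d²` yields
`β c² b ≤ α² (a - b)`, that is `b ≤ ρ a` with `ρ = α² / (β c² + α²) < 1`.
-/

open Filter Topology

/-- The (Fréchet) regular subdifferential of `f` at `x`. -/
def frechetSubdiff {X : Type*} [NormedAddCommGroup X] [InnerProductSpace ℝ X]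
    (f : X → ℝ) (x : X) : Set X :=
  {v : X | ∀ ε > (0 : ℝ), ∃ δ > (0 : ℝ), ∀ y : X, ‖y - x‖ < δ →
      f x + (inner ℝ v (y - x) : ℝ) - ε * ‖y - x‖ ≤ f y}

/-- The limiting (Mordukhovich) subdifferential of `f` at `x`. -/
def limitingSubdiff {X : Type*} [NormedAddCommGroup X] [InnerProductSpace ℝ X]
    (f : X → ℝ) (x : X) : Set X :=
  {v : X | ∃ u : ℕ → X, ∃ w : ℕ → X,
      (∀ n, w n ∈ frechetSubdiff f (u n)) ∧
      Tendsto u atTop (𝓝 x) ∧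
      Tendsto (fun n => f (u n)) atTop (𝓝 (f x)) ∧
      Tendsto w atTop (𝓝 v)}

theorem le_mul_of_sq_le_of_decrease {a b c d α β : ℝ} (hα : 0 < α) (hβ : 0 ≤ β)
    (hdecr : β * d ^ 2 ≤ a - b) (herr : c ^ 2 * b ≤ α ^ 2 * d ^ 2) :
    b ≤ α ^ 2 / (β * c ^ 2 + α ^ 2) * a := by
  have hden : 0 < β * c ^ 2 + α ^ 2 := by positivity
  have key : β * (c ^ 2 * b) ≤ α ^ 2 * (a - b) :=
    calc β * (c ^ 2 * b) ≤ β * (α ^ 2 * d ^ 2) := mul_le_mul_of_nonneg_left herr hβ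
      _ = α ^ 2 * (β * d ^ 2) := by ring
      _ ≤ α ^ 2 * (a - b) := mul_le_mul_of_nonneg_left hdecr (sq_nonneg α)
  rw [div_mul_eq_mul_div, le_div_iff₀ hden]
  linarith

theorem sq_div_add_sq_mem_Ioo {s α : ℝ} (hs : 0 < s) (hα : α ≠ 0) :
    α ^ 2 / (s + α ^ 2) ∈ Set.Ioo (0 : ℝ) 1 := by
  have hα2 : 0 < α ^ 2 := by positivity
  exact ⟨by positivity, (div_lt_one (by positivity)).mpr (by linarith)⟩

theorem eventually_sq_mul_sub_le_of_kl {X : Type*} [NormedAddCommGroup X]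
    [InnerProductSpace ℝ X] (f : X → ℝ) (xbar : X) {c ε η : ℝ} (hc : 0 ≤ c) (hε : 0 < ε)
    (hη : 0 < η)
    (hKL : ∀ x ∈ Metric.ball xbar ε, f xbar < f x → f x < f xbar + η →
      ∀ v ∈ limitingSubdiff f x, c * Real.sqrt (f x - f xbar) ≤ ‖v‖)
    {x : ℕ → X} (hxconv : Tendsto x atTop (𝓝 xbar))
    (hfconv : Tendsto (fun k => f (x k)) atTop (𝓝 (f xbar))) {α : ℝ} {N : ℕ}
    (hre : ∀ k ≥ N, ∃ v ∈ limitingSubdiff f (x (k + 1)),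
      ‖v‖ ≤ α * ‖x (k + 1) - x k‖) :
    ∀ᶠ k in atTop,
      c ^ 2 * (f (x (k + 1)) - f xbar) ≤ α ^ 2 * ‖x (k + 1) - x k‖ ^ 2 := by
  have hball : ∀ᶠ k in atTop, x k ∈ Metric.ball xbar ε :=
    hxconv (Metric.ball_mem_nhds xbar hε)
  have hgap : ∀ᶠ k in atTop, f (x k) < f xbar + η :=
    hfconv.eventually (gt_mem_nhds (by linarith))
  filter_upwards [(tendsto_add_atTop_nat 1).eventually hball,
    (tendsto_add_atTop_nat 1).eventually hgap, eventually_ge_atTop N] with k hkball hkgap hkN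
  rcases le_or_gt (f (x (k + 1))) (f xbar) with hle | hlt
  · exact (mul_nonpos_of_nonneg_of_nonpos (sq_nonneg c) (by linarith)).trans (by positivity)
  obtain ⟨v, hv, hvnorm⟩ := hre k hkN
  have hsqrt : c * Real.sqrt (f (x (k + 1)) - f xbar) ≤ α * ‖x (k + 1) - x k‖ :=
    (hKL _ hkball hlt hkgap v hv).trans hvnorm
  calc c ^ 2 * (f (x (k + 1)) - f xbar)
      = (c * Real.sqrt (f (x (k + 1)) - f xbar)) ^ 2 := by
        rw [mul_pow, Real.sq_sqrt (by linarith)]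
    _ ≤ (α * ‖x (k + 1) - x k‖) ^ 2 := pow_le_pow_left₀ (by positivity) hsqrt 2
    _ = α ^ 2 * ‖x (k + 1) - x k‖ ^ 2 := mul_pow _ _ _

theorem stmt17_general
    {X : Type*} [NormedAddCommGroup X] [InnerProductSpace ℝ X]
    (f : X → ℝ)
    (xbar : X) (c ε η : ℝ) (hc : 0 < c) (hε : 0 < ε) (hη : 0 < η)
    (hKL : ∀ x ∈ Metric.ball xbar ε, f xbar < f x → f x < f xbar + η →
      ∀ v ∈ limitingSubdiff f x, c * Real.sqrt (f x - f xbar) ≤ ‖v‖)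
    (x : ℕ → X) (hxconv : Tendsto x atTop (𝓝 xbar))
    (hfconv : Tendsto (fun k => f (x k)) atTop (𝓝 (f xbar)))
    (α β : ℝ) (hα : 0 < α) (hβ : 0 < β)
    (N : ℕ)
    (hsd : ∀ k ≥ N, β * ‖x (k + 1) - x k‖ ^ 2 ≤ f (x k) - f (x (k + 1)))
    (hre : ∀ k ≥ N, ∃ v ∈ limitingSubdiff f (x (k + 1)),
      ‖v‖ ≤ α * ‖x (k + 1) - x k‖) :
    ∃ ρ ∈ Set.Ioo (0 : ℝ) 1, ∃ K : ℕ, ∀ k ≥ K,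
      f (x (k + 1)) - f xbar ≤ ρ * (f (x k) - f xbar) := by
  obtain ⟨K, hK⟩ := eventually_atTop.mp <| (eventually_ge_atTop N).and <|
    eventually_sq_mul_sub_le_of_kl f xbar hc.le hε hη hKL hxconv hfconv hre
  refine ⟨_, sq_div_add_sq_mem_Ioo (s := β * c ^ 2) (by positivity) hα.ne', K, fun k hk => ?_⟩
  obtain ⟨hkN, herr⟩ := hK k hk
  exact le_mul_of_sq_le_of_decrease (a := f (x k) - f xbar) hα hβ.le
    (by linarith [hsd k hkN]) herr

/-- Suppose the proper lsc function `f` has the KL property with exponent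
`1/2` at `xbar` (constant `c > 0`, radius `ε`, gap `η`), and `x_k → xbar` with
`f (x_k)` decreasing to `f xbar`.  If for all large `k` one has the sufficient decrease
`f (x_k) − f (x_{k+1}) ≥ β ‖x_{k+1} − x_k‖²` and the relative error bound
`dist(0, ∂f (x_{k+1})) ≤ α ‖x_{k+1} − x_k‖`, then `f (x_k) − f xbar → 0` Q-linearly:
there exist `ρ ∈ (0,1)` and `K` with
`f (x_{k+1}) − f xbar ≤ ρ (f (x_k) − f xbar)` for all `k ≥ K`. -/
theorem stmt17
    {X : Type*} [NormedAddCommGroup X] [InnerProductSpace ℝ X] [FiniteDimensional ℝ X]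
    (f : X → ℝ) (hf : LowerSemicontinuous f)
    (xbar : X) (c ε η : ℝ) (hc : 0 < c) (hε : 0 < ε) (hη : 0 < η)
    (hKL : ∀ x ∈ Metric.ball xbar ε, f xbar < f x → f x < f xbar + η →
      ∀ v ∈ limitingSubdiff f x, c * Real.sqrt (f x - f xbar) ≤ ‖v‖)
    (x : ℕ → X) (hxconv : Tendsto x atTop (𝓝 xbar))
    (hmono : ∀ k, f (x (k + 1)) ≤ f (x k))
    (hfconv : Tendsto (fun k => f (x k)) atTop (𝓝 (f xbar)))
    (α β : ℝ) (hα : 0 < α) (hβ : 0 < β)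
    (N : ℕ)
    (hsd : ∀ k ≥ N, β * ‖x (k + 1) - x k‖ ^ 2 ≤ f (x k) - f (x (k + 1)))
    (hre : ∀ k ≥ N, ∃ v ∈ limitingSubdiff f (x (k + 1)),
      ‖v‖ ≤ α * ‖x (k + 1) - x k‖) :
    ∃ ρ ∈ Set.Ioo (0 : ℝ) 1, ∃ K : ℕ, ∀ k ≥ K,
      f (x (k + 1)) - f xbar ≤ ρ * (f (x k) - f xbar) :=
  stmt17_general f xbar c ε η hc hε hη hKL x hxconv hfconv α β hα hβ N hsd hre
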